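/- Let n ≥ 1, m > 0 and 0 < θ ≤ 1. Then there exist δ₀ ∈ (0, δ) and a constant C > 0 depending only on n, δ₀ and θ such that for all t ≥ 1 and all P₁ ∈ ℝ, ∫_{|ξ| ≤ δ₀} P₁² e^{-|ξ|² t} R(|ξ|)² sin²(t√(|ξ|² + m² log(1+|ξ|^{2θ}))) dξ ≤ C m^{-2} P₁² t^{-(n+8−6θ)/2}, where R(r) := 1/b(r) − 1/√(r² + m² log(1 + r^{2θ})). -/

import Mathlib

open MeasureTheory Real

noncomputable section

/-- Euclidean space `ℝⁿ`. -/
abbrev E (n : ℕ) := EuclideanSpace ℝ (Fin n)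

/-- The Fourier transform `û₁(ξ) = ∫ e^{-i x·ξ} u₁(x) dx`. -/
def fourierT (n : ℕ) (u₁ : E n → ℝ) (ξ : E n) : ℂ :=
  ∫ x : E n, Complex.exp (-(Complex.I * ((inner ℝ x ξ : ℝ) : ℂ))) * (u₁ x : ℂ)

/-- `b(r) = (1/2)√(4r² + 4m² log(1+r^{2θ}) − r⁴)` (low frequencies). -/
def bF (m θ r : ℝ) : ℝ :=
  Real.sqrt (4 * r ^ 2 + 4 * m ^ 2 * Real.log (1 + r ^ (2 * θ)) - r ^ 4) / 2

/-- `d(r) = (1/2)√(r⁴ − 4r² − 4m² log(1+r^{2θ}))` (high frequencies). -/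
def dF (m θ r : ℝ) : ℝ :=
  Real.sqrt (r ^ 4 - 4 * r ^ 2 - 4 * m ^ 2 * Real.log (1 + r ^ (2 * θ))) / 2


/-- The remainder `R(r) = 1/b(r) − 1/√(r² + m² log(1+r^{2θ}))`. -/
def RF (m θ r : ℝ) : ℝ :=
  1 / bF m θ r - 1 / Real.sqrt (r ^ 2 + m ^ 2 * Real.log (1 + r ^ (2 * θ)))

/-! On `0 < r ≤ 1` one has `b(r)² = A - r⁴/4` with `A = r² + m² log(1 + r^{2θ}) ≥ m² r^{2θ}/2`,
so `R(r) = 1/√(A - r⁴/4) - 1/√A` is of size `r⁴ / A^{3/2}` and `R(r)² ≤ r^{8-6θ} / (2m⁶)`.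
Taking `δ₀ = 1`, bounding `sin²` by one and extending the integral to all of `ℝⁿ` leaves the
Gaussian moment `∫ e^{-t|ξ|²} |ξ|^{8-6θ} dξ`, which scales exactly like `t^{-(n+8-6θ)/2}`;
the constant absorbs the remaining factor `m⁻⁴`. -/

open Set Module

section GaussianMoments

variable {V : Type*} [NormedAddCommGroup V] [NormedSpace ℝ V] [FiniteDimensional ℝ V]
  [MeasurableSpace V] [BorelSpace V] (μ : Measure V) [μ.IsAddHaarMeasure]

lemma integrable_exp_neg_mul_sq_norm_mul_rpow_norm {b : ℝ} (hb : 0 < b) {p : ℝ}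
    (hp : -(finrank ℝ V : ℝ) < p) :
    Integrable (fun x : V => exp (-b * ‖x‖ ^ 2) * ‖x‖ ^ p) μ := by
  cases subsingleton_or_nontrivial V
  · have : CompactSpace V := Finite.compactSpace
    exact Integrable.of_finite
  have hd : 1 ≤ finrank ℝ V := Module.finrank_pos
  refine (integrable_fun_norm_addHaar μ (f := fun y => exp (-b * y ^ 2) * y ^ p)).2 ?_
  refine (integrableOn_rpow_mul_exp_neg_mul_sq hb (s := (finrank ℝ V - 1 : ℕ) + p)
    (by push_cast [hd]; linarith)).congr_fun (fun y (hy : 0 < y) => ?_) measurableSet_Ioi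
  dsimp only
  rw [rpow_add hy, rpow_natCast, smul_eq_mul]
  ring

lemma integral_exp_neg_mul_sq_norm_mul_rpow_norm {t : ℝ} (ht : 0 < t) (p : ℝ) :
    ∫ x, exp (-t * ‖x‖ ^ 2) * ‖x‖ ^ p ∂μ
      = t ^ (-((finrank ℝ V : ℝ) + p) / 2) * ∫ x, exp (-‖x‖ ^ 2) * ‖x‖ ^ p ∂μ := by
  have hs : 0 < √t := sqrt_pos.2 ht
  have hscale : ∀ x : V, exp (-t * ‖x‖ ^ 2) * ‖x‖ ^ p
      = √t ^ (-p) * (exp (-‖√t • x‖ ^ 2) * ‖√t • x‖ ^ p) := fun x => by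
    rw [norm_smul, norm_of_nonneg hs.le, mul_pow, sq_sqrt ht.le,
      mul_rpow hs.le (norm_nonneg x), rpow_neg hs.le]
    field_simp
  simp_rw [hscale]
  rw [integral_const_mul, Measure.integral_comp_smul μ (fun x => exp (-‖x‖ ^ 2) * ‖x‖ ^ p),
    smul_eq_mul, abs_of_pos (by positivity), ← mul_assoc, sqrt_eq_rpow, ← rpow_natCast,
    ← rpow_mul ht.le, ← rpow_mul ht.le, ← rpow_neg ht.le, ← rpow_add ht]
  ring_nf

end GaussianMoments

lemma half_le_log_one_add {x : ℝ} (hx0 : 0 ≤ x) (hx1 : x ≤ 1) : x / 2 ≤ log (1 + x) := by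
  have h := one_sub_inv_le_log_of_pos (show 0 < 1 + x by linarith)
  have : x / 2 ≤ 1 - (1 + x)⁻¹ := by
    rw [inv_eq_one_div, le_sub_iff_add_le, ← le_sub_iff_add_le', div_le_iff₀ (by linarith)]
    nlinarith
  linarith

lemma inv_sqrt_sub_inv_sqrt_sq_le {a b c : ℝ} (hc : 0 < c) (hcb : c ≤ b) (hba : b ≤ a) :
    (1 / √b - 1 / √a) ^ 2 ≤ (a - b) ^ 2 / c ^ 3 := by
  have hb : 0 < b := hc.trans_le hcb
  have ha : 0 < a := hb.trans_le hba
  have hsb := sqrt_pos.2 hb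
  have hsa := sqrt_pos.2 ha
  have hsab : √b ≤ √a := sqrt_le_sqrt hba
  -- `√a - √b = (a - b) / (√a + √b) ≤ (a - b) / √a`
  have hdiff : 1 / √b - 1 / √a ≤ (a - b) / (a * √b) := by
    rw [div_sub_div _ _ hsb.ne' hsa.ne', div_le_div_iff₀ (by positivity) (by positivity)]
    have hA := sq_sqrt ha.le
    have hB := sq_sqrt hb.le
    generalize √a = u at *
    generalize √b = v at *
    subst hA hB
    nlinarith [mul_nonneg (mul_nonneg (sub_nonneg.2 hsab) hsa.le) (sq_nonneg v)]
  have h0 : 0 ≤ 1 / √b - 1 / √a := by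
    rw [sub_nonneg]; exact one_div_le_one_div_of_le hsb hsab
  calc (1 / √b - 1 / √a) ^ 2 ≤ ((a - b) / (a * √b)) ^ 2 := pow_le_pow_left₀ h0 hdiff 2
    _ = (a - b) ^ 2 / (a ^ 2 * b) := by rw [div_pow, mul_pow, sq_sqrt hb.le]
    _ ≤ (a - b) ^ 2 / c ^ 3 := by
      gcongr
      calc c ^ 3 = c ^ 2 * c := by ring
        _ ≤ a ^ 2 * b := by gcongr; linarith

lemma bF_eq_sqrt (m θ r : ℝ) :
    bF m θ r = √(r ^ 2 + m ^ 2 * log (1 + r ^ (2 * θ)) - r ^ 4 / 4) := by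
  rw [bF, show 4 * r ^ 2 + 4 * m ^ 2 * log (1 + r ^ (2 * θ)) - r ^ 4
      = 2 ^ 2 * (r ^ 2 + m ^ 2 * log (1 + r ^ (2 * θ)) - r ^ 4 / 4) by ring,
    sqrt_mul (by norm_num), sqrt_sq (by norm_num)]
  ring

lemma RF_sq_le {m θ r : ℝ} (hm : m ≠ 0) (hθ : 0 < θ) (hr0 : 0 ≤ r) (hr1 : r ≤ 1) :
    RF m θ r ^ 2 ≤ r ^ (8 - 6 * θ) / (2 * m ^ 6) := by
  rcases hr0.eq_or_lt with rfl | hr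
  · rw [show RF m θ 0 = 0 by simp [RF, bF_eq_sqrt], zero_pow two_ne_zero]
    positivity
  set x := r ^ (2 * θ) with hx
  have hx0 : 0 < x := rpow_pos_of_pos hr _
  have hx1 : x ≤ 1 := rpow_le_one hr0 hr1 (by positivity)
  have hc : m ^ 2 * x / 2 ≤ r ^ 2 + m ^ 2 * log (1 + x) - r ^ 4 / 4 := by
    have := half_le_log_one_add hx0.le hx1
    nlinarith [sq_nonneg m, pow_le_one₀ hr0 hr1 (n := 2)]
  have hr8 : r ^ 8 / x ^ 3 = r ^ (8 - 6 * θ) := by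
    rw [hx, ← rpow_natCast, ← rpow_natCast, ← rpow_mul hr0, ← rpow_sub hr]
    push_cast
    ring_nf
  calc RF m θ r ^ 2 ≤ (r ^ 4 / 4) ^ 2 / (m ^ 2 * x / 2) ^ 3 := by
        rw [RF, bF_eq_sqrt]
        convert inv_sqrt_sub_inv_sqrt_sq_le (by positivity) hc
          (a := r ^ 2 + m ^ 2 * log (1 + x)) (by linarith [pow_nonneg hr0 4]) using 2
        ring
    _ = r ^ (8 - 6 * θ) / (2 * m ^ 6) := by
        rw [← hr8]
        field_simp
        ring

theorem stmt7_general (n : ℕ) (m θ : ℝ) (hm : 0 < m) (hθ1 : 0 < θ) (hθ2 : θ ≤ 1)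
    (δ : ℝ) (hδ2 : 2 < δ) :
    ∃ δ₀ : ℝ, 0 < δ₀ ∧ δ₀ < δ ∧ ∃ C : ℝ, 0 < C ∧
      ∀ t : ℝ, 1 ≤ t → ∀ P₁ : ℝ,
        (∫ ξ in {ξ : E n | ‖ξ‖ ≤ δ₀},
            P₁ ^ 2 * Real.exp (-(‖ξ‖ ^ 2) * t) * RF m θ ‖ξ‖ ^ 2 *
              Real.sin (t * Real.sqrt (‖ξ‖ ^ 2 + m ^ 2 * Real.log (1 + ‖ξ‖ ^ (2 * θ)))) ^ 2) ≤
          C * m⁻¹ ^ 2 * P₁ ^ 2 * t ^ (-((n : ℝ) + 8 - 6 * θ) / 2) := by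
  set I := ∫ x : E n, exp (-‖x‖ ^ 2) * ‖x‖ ^ (8 - 6 * θ)
  have hI : 0 ≤ I := integral_nonneg fun x => by positivity
  refine ⟨1, one_pos, by linarith, (I + 1) / (2 * m ^ 4), by positivity, fun t ht P₁ => ?_⟩
  set g : E n → ℝ := fun ξ => P₁ ^ 2 / (2 * m ^ 6) * (exp (-t * ‖ξ‖ ^ 2) * ‖ξ‖ ^ (8 - 6 * θ))
  have hg : Integrable g := (integrable_exp_neg_mul_sq_norm_mul_rpow_norm volume
    (by linarith) (by linarith [(finrank ℝ (E n)).cast_nonneg (α := ℝ)])).const_mul _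
  have hle : ∀ ξ : E n, ‖ξ‖ ≤ 1 → P₁ ^ 2 * exp (-(‖ξ‖ ^ 2) * t) * RF m θ ‖ξ‖ ^ 2 *
      sin (t * √(‖ξ‖ ^ 2 + m ^ 2 * log (1 + ‖ξ‖ ^ (2 * θ)))) ^ 2 ≤ g ξ := fun ξ hξ => by
    calc _ ≤ P₁ ^ 2 * exp (-(‖ξ‖ ^ 2) * t) * (‖ξ‖ ^ (8 - 6 * θ) / (2 * m ^ 6)) * 1 := by
          gcongr
          · exact RF_sq_le hm.ne' hθ1 (norm_nonneg ξ) hξ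
          · exact sin_sq_le_one _
      _ = g ξ := by simp only [g]; ring_nf
  set T := t ^ (-((n : ℝ) + 8 - 6 * θ) / 2)
  calc _ ≤ ∫ ξ in {ξ : E n | ‖ξ‖ ≤ 1}, g ξ :=
        integral_mono_of_nonneg (ae_of_all _ fun ξ => by positivity) hg.integrableOn
          ((ae_restrict_iff' (isClosed_le continuous_norm continuous_const).measurableSet).2
            (ae_of_all _ hle))
    _ ≤ ∫ ξ, g ξ := setIntegral_le_integral hg (ae_of_all _ fun ξ => by positivity)
    _ = P₁ ^ 2 * T / (2 * m ^ 6) * I := by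
        rw [integral_const_mul, integral_exp_neg_mul_sq_norm_mul_rpow_norm volume (by linarith),
          finrank_euclideanSpace_fin, ← add_sub_assoc]
        ring
    _ ≤ P₁ ^ 2 * T / (2 * m ^ 6) * (I + 1) := by gcongr; linarith
    _ = (I + 1) / (2 * m ^ 4) * m⁻¹ ^ 2 * P₁ ^ 2 * T := by field_simp

/-- the `F₁`-estimate on the low frequency zone. -/
theorem stmt7 (n : ℕ) (hn : 1 ≤ n) (m θ : ℝ) (hm : 0 < m) (hθ1 : 0 < θ) (hθ2 : θ ≤ 1)
    (δ : ℝ) (hδ2 : 2 < δ)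
    (hδneg : ∀ r : ℝ, 0 < r → r < δ →
      r ^ 4 - 4 * r ^ 2 - 4 * m ^ 2 * Real.log (1 + r ^ (2 * θ)) < 0)
    (hδpos : ∀ r : ℝ, δ ≤ r →
      0 ≤ r ^ 4 - 4 * r ^ 2 - 4 * m ^ 2 * Real.log (1 + r ^ (2 * θ))) :
    ∃ δ₀ : ℝ, 0 < δ₀ ∧ δ₀ < δ ∧ ∃ C : ℝ, 0 < C ∧
      ∀ t : ℝ, 1 ≤ t → ∀ P₁ : ℝ,
        (∫ ξ in {ξ : E n | ‖ξ‖ ≤ δ₀},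
            P₁ ^ 2 * Real.exp (-(‖ξ‖ ^ 2) * t) * RF m θ ‖ξ‖ ^ 2 *
              Real.sin (t * Real.sqrt (‖ξ‖ ^ 2 + m ^ 2 * Real.log (1 + ‖ξ‖ ^ (2 * θ)))) ^ 2) ≤
          C * m⁻¹ ^ 2 * P₁ ^ 2 * t ^ (-((n : ℝ) + 8 - 6 * θ) / 2) :=
  stmt7_general n m θ hm hθ1 hθ2 δ hδ2
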